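/- Let S be a finite nonempty type. Let P, Q, and P̂ be row-stochastic S × S real matrices (all entries nonnegative and each row summing to 1), let μ be a stationary distribution of P and ν a stationary distribution of Q, and let δ : S → ℝ be nonnegative with ∑_{s'} |P(s,s') − P̂(s,s')| ≤ δ(s) and ∑_{s'} |Q(s,s') − P̂(s,s')| ≤ δ(s) for every s. Let C ≥ 1 and 0 < ρ < 1 be reals such that for every probability vector λ on S and every integer t ≥ 1, ∑_s |(λPᵗ)(s) − μ(s)| ≤ C·ρᵗ, and set n̂ := ⌈log C / log(1/ρ)⌉. Then for every function f : S → ℝ with 0 ≤ f(s) ≤ 1 for all s, |∑_s μ(s)·f(s) − ∑_s ν(s)·f(s)| ≤ 2·(n̂ + C·ρ^{n̂}/(1 − ρ)) · max_s δ(s). -/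

import Mathlib

/-!
Put `e := ν - νP = ν(Q - P)`, using `νQ = ν`; it has total mass zero and `‖e‖₁ ≤ 2 max δ` by the
triangle inequality through `P̂`. Telescoping gives `ν - νPᵀ = ∑_{t<T} ePᵗ`. Each term has
`‖ePᵗ‖₁ ≤ ‖e‖₁` because `Pᵗ` is stochastic, and `‖ePᵗ‖₁ ≤ ‖e‖₁ Cρᵗ` by the mixing bound applied to
the normalised positive and negative parts of `e`. Using the first bound for `t < n̂` and the
second for `t ≥ n̂` bounds `|E_{νPᵀ} f - E_ν f|` uniformly in `T`, and `νPᵀ → μ` as `T → ∞`.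
-/

open Matrix Finset Filter Topology

section LOneNorm

variable {m n : Type*} [Fintype m] [Fintype n]

theorem abs_dotProduct_le_sum_abs (x f : n → ℝ) (hf : ∀ j, |f j| ≤ 1) :
    |x ⬝ᵥ f| ≤ ∑ j, |x j| :=
  (abs_sum_le_sum_abs _ _).trans <| sum_le_sum fun j _ => by
    rw [abs_mul]
    exact mul_le_of_le_one_right (abs_nonneg _) (hf j)

theorem sum_abs_vecMul_le (w : m → ℝ) (A : Matrix m n ℝ) :
    ∑ j, |(w ᵥ* A) j| ≤ ∑ i, |w i| * ∑ j, |A i j| := by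
  calc ∑ j, |(w ᵥ* A) j| ≤ ∑ j, ∑ i, |w i| * |A i j| :=
        sum_le_sum fun j _ => (abs_sum_le_sum_abs _ _).trans_eq (by simp only [abs_mul])
    _ = ∑ i, |w i| * ∑ j, |A i j| := by rw [sum_comm]; simp only [mul_sum]

theorem sum_abs_vecMul_le_of_forall_prob {A : Matrix m n ℝ} {μ : n → ℝ} {c : ℝ}
    (hA : ∀ l : m → ℝ, (∀ i, 0 ≤ l i) → ∑ i, l i = 1 → ∑ j, |(l ᵥ* A) j - μ j| ≤ c)
    {e : m → ℝ} (he : ∑ i, e i = 0) :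
    ∑ j, |(e ᵥ* A) j| ≤ (∑ i, |e i|) * c := by
  set p : m → ℝ := fun i => (e i)⁺
  set q : m → ℝ := fun i => (e i)⁻
  set k := ∑ i, p i
  have hq : ∑ i, q i = k := by
    have : ∑ i, p i - ∑ i, q i = 0 := by
      simpa only [← sum_sub_distrib, p, q, posPart_sub_negPart] using he
    linarith
  have hnorm : ∑ i, |e i| = 2 * k := by
    simp only [← posPart_add_negPart, sum_add_distrib]
    linarith
  obtain hk | hk := (show 0 ≤ k from sum_nonneg fun i _ => posPart_nonneg (e i)).eq_or_lt
  · have he0 : e = 0 := funext fun i => abs_eq_zero.mp <|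
      (sum_eq_zero_iff_of_nonneg fun i _ => abs_nonneg (e i)).mp (by linarith) i (mem_univ i)
    simp [he0]
  have hprob : ∀ r : m → ℝ, (∀ i, 0 ≤ r i) → ∑ i, r i = k →
      ∑ j, |((k⁻¹ • r) ᵥ* A) j - μ j| ≤ c := fun r hr hsum =>
    hA _ (fun i => mul_nonneg (inv_nonneg.mpr hk.le) (hr i))
      (by simp only [Pi.smul_apply, smul_eq_mul, ← mul_sum, hsum, inv_mul_cancel₀ hk.ne'])
  set u := (k⁻¹ • p) ᵥ* A - μ
  set v := (k⁻¹ • q) ᵥ* A - μ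
  have hdecomp : e ᵥ* A = k • (u - v) := by
    have : e = k • (k⁻¹ • p - k⁻¹ • q) := by
      rw [← smul_sub, smul_smul, mul_inv_cancel₀ hk.ne', one_smul]
      exact funext fun i => (posPart_sub_negPart (e i)).symm
    rw [sub_sub_sub_cancel_right, ← sub_vecMul, ← smul_vecMul, ← this]
  calc ∑ j, |(e ᵥ* A) j| = k * ∑ j, |u j - v j| := by
        simp only [hdecomp, Pi.smul_apply, Pi.sub_apply, smul_eq_mul, abs_mul, abs_of_pos hk,
          mul_sum]
    _ ≤ k * (∑ j, |u j| + ∑ j, |v j|) := by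
        gcongr
        exact (sum_le_sum fun j _ => abs_sub _ _).trans_eq sum_add_distrib
    _ ≤ k * (c + c) := by
        gcongr
        · exact hprob p (fun i => posPart_nonneg _) rfl
        · exact hprob q (fun i => negPart_nonneg _) hq
    _ = (∑ i, |e i|) * c := by rw [hnorm]; ring

theorem sum_abs_sub_vecMul_le {P Q : Matrix n n ℝ} {ν : n → ℝ} {ε : ℝ}
    (hν0 : ∀ s, 0 ≤ ν s) (hν1 : ∑ s, ν s = 1) (hνQ : ν ᵥ* Q = ν)
    (hQP : ∀ s, ∑ s', |Q s s' - P s s'| ≤ ε) :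
    ∑ s, |(ν - ν ᵥ* P) s| ≤ ε := by
  nth_rewrite 1 [← hνQ]
  rw [← vecMul_sub]
  calc _ ≤ ∑ s, |ν s| * ∑ s', |(Q - P) s s'| := sum_abs_vecMul_le ν (Q - P)
    _ ≤ ∑ s, ν s * ε := sum_le_sum fun s _ => by
        rw [abs_of_nonneg (hν0 s)]
        exact mul_le_mul_of_nonneg_left (hQP s) (hν0 s)
    _ = ε := by rw [← sum_mul, hν1, one_mul]

end LOneNorm

theorem sub_vecMul_pow_eq_sum {R n : Type*} [Ring R] [Fintype n] [DecidableEq n]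
    (P : Matrix n n R) (ν : n → R) (T : ℕ) :
    ν - ν ᵥ* P ^ T = ∑ t ∈ range T, (ν - ν ᵥ* P) ᵥ* P ^ t := by
  have step : ∀ t, (ν - ν ᵥ* P) ᵥ* P ^ t = ν ᵥ* P ^ t - ν ᵥ* P ^ (t + 1) := fun t => by
    rw [sub_vecMul, vecMul_vecMul, pow_succ']
  simp_rw [step]
  rw [sum_range_sub', pow_zero, vecMul_one]

theorem sum_range_le_of_le_of_le_geom {a : ℕ → ℝ} {B K ρ : ℝ} {N T : ℕ} (hNT : N ≤ T)
    (hK : 0 ≤ K) (hρ0 : 0 ≤ ρ) (hρ1 : ρ < 1)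
    (hB : ∀ t < N, a t ≤ B) (hgeom : ∀ t ≥ N, a t ≤ K * ρ ^ t) :
    ∑ t ∈ range T, a t ≤ N * B + K * (ρ ^ N / (1 - ρ)) := by
  rw [← sum_range_add_sum_Ico _ hNT]
  gcongr ?_ + ?_
  · calc ∑ t ∈ range N, a t ≤ ∑ t ∈ range N, B := sum_le_sum fun t ht => hB t (mem_range.mp ht)
      _ = N * B := by rw [sum_const, card_range, nsmul_eq_mul]
  · calc ∑ t ∈ Ico N T, a t ≤ ∑ t ∈ Ico N T, K * ρ ^ t :=
          sum_le_sum fun t ht => hgeom t (mem_Ico.mp ht).1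
      _ = K * ∑ t ∈ Ico N T, ρ ^ t := (mul_sum _ _ _).symm
      _ ≤ K * (ρ ^ N / (1 - ρ)) := by gcongr; exact geom_sum_Ico_le_of_lt_one hρ0 hρ1

section Stochastic

variable {n : Type*} [Fintype n] [DecidableEq n] {P Q : Matrix n n ℝ} {μ ν : n → ℝ}

theorem sum_vecMul_of_mem_rowStochastic (hP : P ∈ rowStochastic ℝ n) (w : n → ℝ) :
    ∑ j, (w ᵥ* P) j = ∑ i, w i := by
  rw [← dotProduct_one, ← dotProduct_one, ← dotProduct_mulVec,
    one_vecMul_of_mem_rowStochastic hP]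

theorem sum_abs_vecMul_le_of_mem_rowStochastic (hP : P ∈ rowStochastic ℝ n) (w : n → ℝ) :
    ∑ j, |(w ᵥ* P) j| ≤ ∑ i, |w i| := by
  refine (sum_abs_vecMul_le w P).trans_eq (sum_congr rfl fun i _ => ?_)
  simp_rw [abs_of_nonneg (nonneg_of_mem_rowStochastic hP), sum_row_of_mem_rowStochastic hP,
    mul_one]

theorem sum_abs_vecMul_pow_le {C ρ : ℝ} (hC : 1 ≤ C)
    (hmix : ∀ l : n → ℝ, (∀ s, 0 ≤ l s) → ∑ s, l s = 1 →
      ∀ t : ℕ, 1 ≤ t → ∑ s, |(l ᵥ* P ^ t) s - μ s| ≤ C * ρ ^ t)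
    {e : n → ℝ} (he : ∑ s, e s = 0) (t : ℕ) :
    ∑ s, |(e ᵥ* P ^ t) s| ≤ (∑ s, |e s|) * (C * ρ ^ t) := by
  rcases Nat.eq_zero_or_pos t with rfl | ht
  · simpa using le_mul_of_one_le_right (sum_nonneg fun s _ => abs_nonneg (e s)) hC
  · exact sum_abs_vecMul_le_of_forall_prob (fun l hl0 hl1 => hmix l hl0 hl1 t ht) he

/-- The paper takes `N = n̂`, the first cutoff with `Cρ^N ≤ 1`. -/
theorem abs_dotProduct_sub_le_of_vecMul_eq {f : n → ℝ} {ε C ρ : ℝ}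
    (hP : P ∈ rowStochastic ℝ n) (hν0 : ∀ s, 0 ≤ ν s) (hν1 : ∑ s, ν s = 1)
    (hνQ : ν ᵥ* Q = ν) (hQP : ∀ s, ∑ s', |Q s s' - P s s'| ≤ ε)
    (hC : 1 ≤ C) (hρ0 : 0 ≤ ρ) (hρ1 : ρ < 1)
    (hmix : ∀ l : n → ℝ, (∀ s, 0 ≤ l s) → ∑ s, l s = 1 →
      ∀ t : ℕ, 1 ≤ t → ∑ s, |(l ᵥ* P ^ t) s - μ s| ≤ C * ρ ^ t)
    (hf : ∀ s, |f s| ≤ 1) (N : ℕ) :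
    |μ ⬝ᵥ f - ν ⬝ᵥ f| ≤ (N + C * ρ ^ N / (1 - ρ)) * ε := by
  set e := ν - ν ᵥ* P
  have he_sum : ∑ s, e s = 0 := by
    simp only [e, Pi.sub_apply, sum_sub_distrib, sum_vecMul_of_mem_rowStochastic hP, sub_self]
  have he_norm : ∑ s, |e s| ≤ ε := sum_abs_sub_vecMul_le hν0 hν1 hνQ hQP
  have hε : 0 ≤ ε := (sum_nonneg fun s _ => abs_nonneg _).trans he_norm
  have hpartial : ∀ T ≥ N, |(ν ᵥ* P ^ T) ⬝ᵥ f - ν ⬝ᵥ f| ≤ (N + C * ρ ^ N / (1 - ρ)) * ε := by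
    intro T hT
    rw [abs_sub_comm, ← sub_dotProduct, sub_vecMul_pow_eq_sum, sum_dotProduct]
    calc |∑ t ∈ range T, (e ᵥ* P ^ t) ⬝ᵥ f| ≤ ∑ t ∈ range T, |(e ᵥ* P ^ t) ⬝ᵥ f| :=
          abs_sum_le_sum_abs _ _
      _ ≤ N * ε + ε * C * (ρ ^ N / (1 - ρ)) := by
          refine sum_range_le_of_le_of_le_geom hT (by positivity) hρ0 hρ1 (fun t _ => ?_)
            (fun t _ => ?_)
          · exact (abs_dotProduct_le_sum_abs _ f hf).trans <|
              (sum_abs_vecMul_le_of_mem_rowStochastic (pow_mem hP t) e).trans he_norm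
          · refine (abs_dotProduct_le_sum_abs _ f hf).trans <|
              (sum_abs_vecMul_pow_le hC hmix he_sum t).trans ?_
            rw [← mul_assoc]
            gcongr
      _ = (N + C * ρ ^ N / (1 - ρ)) * ε := by ring
  have hmixing : ∀ T ≥ 1, |μ ⬝ᵥ f - (ν ᵥ* P ^ T) ⬝ᵥ f| ≤ C * ρ ^ T := fun T hT => by
    rw [abs_sub_comm, ← sub_dotProduct]
    exact (abs_dotProduct_le_sum_abs _ f hf).trans (hmix ν hν0 hν1 T hT)
  have hlim : Tendsto (fun T : ℕ => (N + C * ρ ^ N / (1 - ρ)) * ε + C * ρ ^ T) atTop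
      (𝓝 ((N + C * ρ ^ N / (1 - ρ)) * ε)) := by
    simpa using tendsto_const_nhds.add
      ((tendsto_pow_atTop_nhds_zero_of_lt_one hρ0 hρ1).const_mul C)
  refine ge_of_tendsto hlim (eventually_atTop.2 ⟨max N 1, fun T hT => ?_⟩)
  calc |μ ⬝ᵥ f - ν ⬝ᵥ f|
      ≤ |μ ⬝ᵥ f - (ν ᵥ* P ^ T) ⬝ᵥ f| + |(ν ᵥ* P ^ T) ⬝ᵥ f - ν ⬝ᵥ f| := abs_sub_le _ _ _
    _ ≤ C * ρ ^ T + (N + C * ρ ^ N / (1 - ρ)) * ε :=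
        add_le_add (hmixing T (le_of_max_le_right hT)) (hpartial T (le_of_max_le_left hT))
    _ = (N + C * ρ ^ N / (1 - ρ)) * ε + C * ρ ^ T := add_comm _ _

end Stochastic

theorem stmt6_general {S : Type*} [Fintype S] [DecidableEq S] [Nonempty S]
    (P Q Phat : Matrix S S ℝ) (μ ν : S → ℝ) (δ : S → ℝ) (C ρ : ℝ)
    (hP0 : ∀ s s', 0 ≤ P s s') (hP1 : ∀ s, ∑ s', P s s' = 1)
    (hν0 : ∀ s, 0 ≤ ν s) (hν1 : ∑ s, ν s = 1) (hνQ : Matrix.vecMul ν Q = ν)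
    (hPδ : ∀ s, ∑ s', |P s s' - Phat s s'| ≤ δ s)
    (hQδ : ∀ s, ∑ s', |Q s s' - Phat s s'| ≤ δ s)
    (hC : 1 ≤ C) (hρ0 : 0 < ρ) (hρ1 : ρ < 1)
    (hmix : ∀ l : S → ℝ, (∀ s, 0 ≤ l s) → ∑ s, l s = 1 →
      ∀ t : ℕ, 1 ≤ t → ∑ s, |Matrix.vecMul l (P ^ t) s - μ s| ≤ C * ρ ^ t) :
    ∀ f : S → ℝ, (∀ s, 0 ≤ f s ∧ f s ≤ 1) →
      |∑ s, μ s * f s - ∑ s, ν s * f s| ≤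
        2 * ((⌈Real.log C / Real.log (1 / ρ)⌉ : ℝ)
            + C * ρ ^ (⌈Real.log C / Real.log (1 / ρ)⌉ : ℤ) / (1 - ρ))
          * Finset.univ.sup' Finset.univ_nonempty δ := by
  intro f hf
  set D := Finset.univ.sup' Finset.univ_nonempty δ
  have hQP : ∀ s, ∑ s', |Q s s' - P s s'| ≤ 2 * D := by
    intro s
    calc ∑ s', |Q s s' - P s s'| ≤ ∑ s', (|Q s s' - Phat s s'| + |P s s' - Phat s s'|) :=
          sum_le_sum fun s' _ =>
            (abs_sub_le _ (Phat s s') _).trans_eq (by rw [abs_sub_comm (Phat s s')])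
      _ ≤ 2 * D := by
          rw [sum_add_distrib]; linarith [hQδ s, hPδ s, le_sup' δ (mem_univ s)]
  have hnhat : 0 ≤ ⌈Real.log C / Real.log (1 / ρ)⌉ := Int.ceil_nonneg <|
    div_nonneg (Real.log_nonneg hC) (Real.log_nonneg (one_le_one_div hρ0 hρ1.le))
  obtain ⟨N, hN⟩ := Int.eq_ofNat_of_zero_le hnhat
  rw [hN, zpow_natCast, Int.cast_natCast]
  refine (abs_dotProduct_sub_le_of_vecMul_eq (mem_rowStochastic_iff_sum.2 ⟨hP0, hP1⟩) hν0 hν1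
    hνQ hQP hC hρ0.le hρ1 hmix (fun s => abs_le.2 ⟨by linarith [hf s], (hf s).2⟩) N).trans_eq ?_
  ring

/-- Lemma 6 (consrange) in finite-matrix form: if the true matrix `P` and an optimistic
matrix `Q` both lie within ℓ₁ radius `δ s` of the estimate `P̂` on each row `s`, `μ, ν`
are stationary distributions of `P, Q`, and `P` is geometrically ergodic with constants
`C ≥ 1`, `0 < ρ < 1`, then for every `f : S → [0,1]`,
`|E_μ f − E_ν f| ≤ 2 (n̂ + C ρ^n̂/(1−ρ)) max_s δ s` where `n̂ = ⌈log C / log (1/ρ)⌉`. -/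
theorem stmt6 {S : Type*} [Fintype S] [DecidableEq S] [Nonempty S]
    (P Q Phat : Matrix S S ℝ) (μ ν : S → ℝ) (δ : S → ℝ) (C ρ : ℝ)
    (hP0 : ∀ s s', 0 ≤ P s s') (hP1 : ∀ s, ∑ s', P s s' = 1)
    (hQ0 : ∀ s s', 0 ≤ Q s s') (hQ1 : ∀ s, ∑ s', Q s s' = 1)
    (hPhat0 : ∀ s s', 0 ≤ Phat s s') (hPhat1 : ∀ s, ∑ s', Phat s s' = 1)
    (hμ0 : ∀ s, 0 ≤ μ s) (hμ1 : ∑ s, μ s = 1) (hμP : Matrix.vecMul μ P = μ)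
    (hν0 : ∀ s, 0 ≤ ν s) (hν1 : ∑ s, ν s = 1) (hνQ : Matrix.vecMul ν Q = ν)
    (hδ0 : ∀ s, 0 ≤ δ s)
    (hPδ : ∀ s, ∑ s', |P s s' - Phat s s'| ≤ δ s)
    (hQδ : ∀ s, ∑ s', |Q s s' - Phat s s'| ≤ δ s)
    (hC : 1 ≤ C) (hρ0 : 0 < ρ) (hρ1 : ρ < 1)
    (hmix : ∀ l : S → ℝ, (∀ s, 0 ≤ l s) → ∑ s, l s = 1 →
      ∀ t : ℕ, 1 ≤ t → ∑ s, |Matrix.vecMul l (P ^ t) s - μ s| ≤ C * ρ ^ t) :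
    ∀ f : S → ℝ, (∀ s, 0 ≤ f s ∧ f s ≤ 1) →
      |∑ s, μ s * f s - ∑ s, ν s * f s| ≤
        2 * ((⌈Real.log C / Real.log (1 / ρ)⌉ : ℝ)
            + C * ρ ^ (⌈Real.log C / Real.log (1 / ρ)⌉ : ℤ) / (1 - ρ))
          * Finset.univ.sup' Finset.univ_nonempty δ :=
  stmt6_general P Q Phat μ ν δ C ρ hP0 hP1 hν0 hν1 hνQ hPδ hQδ hC hρ0 hρ1 hmix
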